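/- Let α ∈ (0,1) be irrational and n ≥ 1 with L = k_0(n) ≥ 2 (or L ≥ 1 if α < 1/2). Then ‖nα‖ = {nα} if L is even, and ‖nα‖ = 1 − {nα} if L is odd, where {·} is the fractional part and ‖·‖ the distance to the nearest integer. -/

import Mathlib

/-- Gauss-map iterates of `α`. -/
noncomputable def cfFrac (α : ℝ) : ℕ → ℝ
  | 0 => α
  | k + 1 => Int.fract (1 / cfFrac α k)

/-- Partial quotients of `α` (1-indexed, `cfA α 0 = 0` unused). -/
noncomputable def cfA (α : ℝ) : ℕ → ℕ
  | 0 => 0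
  | k + 1 => (⌊1 / cfFrac α k⌋).toNat

/-- Numerators of the convergents of `α`. -/
noncomputable def cfP (α : ℝ) : ℕ → ℕ
  | 0 => 0
  | 1 => 1
  | k + 2 => cfA α (k + 2) * cfP α (k + 1) + cfP α k

/-- Denominators of the convergents of `α`. -/
noncomputable def cfQ (α : ℝ) : ℕ → ℕ
  | 0 => 1
  | 1 => cfA α 1
  | k + 2 => cfA α (k + 2) * cfQ α (k + 1) + cfQ α k

/-- Distance from `x` to the nearest integer. -/
noncomputable def distNearInt (x : ℝ) : ℝ := min (Int.fract x) (1 - Int.fract x)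

/-- `b` is the sequence of digits of an Ostrowski representation of `n` w.r.t. `α`:
`n = Σ b_k q_k` with `0 ≤ b_0 ≤ a_1 - 1`, `0 ≤ b_k ≤ a_{k+1}` for `k ≥ 1`, and
`b_{k-1} = 0` whenever `b_k = a_{k+1}`. -/
def OstrowskiRep (α : ℝ) (n : ℕ) (b : ℕ → ℕ) : Prop :=
  b 0 ≤ cfA α 1 - 1 ∧
  (∀ k, 1 ≤ k → b k ≤ cfA α (k + 1)) ∧
  (∀ k, 1 ≤ k → b k = cfA α (k + 1) → b (k - 1) = 0) ∧
  ∃ N, (∀ k, N < k → b k = 0) ∧ n = ∑ k ∈ Finset.range (N + 1), b k * cfQ α k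

/-
Write `D_k = x_0 x_1 ⋯ x_{k-1}` (`cfProd`) for the product of the Gauss-map iterates `x_i`. Then
`q_k α - p_k = (-1)^k D_{k+1}` and `D_k = a_{k+1} D_{k+1} + D_{k+2}`. If the lowest Ostrowski
digit of `n` sits at index `L`, then `n α` is an integer plus `(-1)^L t`, where `t`
(`ostrowskiTail`) is the alternating sum of the `b_k D_{k+1}` over `k ≥ L`. The digit bounds
`b_k ≤ a_{k+1}` and the recursion give `0 < t < D_L`, and `D_L < 1/2` as soon as `L ≥ 2`
(because `2 D_{k+2} < D_k`) or `L = 1` and `α < 1/2` (because `D_1 = α`). So `n α` lies just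
above an integer when `L` is even and just below one when `L` is odd.
-/

open Finset

lemma irrational_cfFrac {α : ℝ} (hα : Irrational α) : ∀ k, Irrational (cfFrac α k)
  | 0 => hα
  | k + 1 => by
    rw [cfFrac, Int.fract]
    simpa only [one_div] using (irrational_cfFrac hα k).inv.sub_intCast _

lemma cfFrac_mem_Ioo {α : ℝ} (hα : α ∈ Set.Ioo (0 : ℝ) 1) (hirr : Irrational α) :
    ∀ k, cfFrac α k ∈ Set.Ioo (0 : ℝ) 1
  | 0 => hα
  | k + 1 =>
    ⟨(Int.fract_nonneg _).lt_of_ne' (irrational_cfFrac hirr (k + 1)).ne_zero,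
      Int.fract_lt_one _⟩

lemma cast_cfA_succ {α : ℝ} {k : ℕ} (hk : 0 < cfFrac α k) :
    (cfA α (k + 1) : ℝ) = ⌊1 / cfFrac α k⌋ := by
  rw [cfA, ← Int.cast_natCast, Int.toNat_of_nonneg (Int.floor_nonneg.mpr (by positivity))]

lemma one_le_cfA_succ {α : ℝ} {k : ℕ} (hk : cfFrac α k ∈ Set.Ioo (0 : ℝ) 1) :
    1 ≤ cfA α (k + 1) := by
  have h : (1 : ℝ) ≤ cfA α (k + 1) := by
    rw [cast_cfA_succ hk.1, ← Int.cast_one, Int.cast_le, Int.le_floor, Int.cast_one,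
      le_div_iff₀ hk.1, one_mul]
    exact hk.2.le
  exact_mod_cast h

lemma cfFrac_mul_cfFrac_succ {α : ℝ} {k : ℕ} (hk : 0 < cfFrac α k) :
    cfFrac α k * cfFrac α (k + 1) = 1 - cfA α (k + 1) * cfFrac α k := by
  rw [cfFrac, Int.fract, cast_cfA_succ hk]
  field_simp

noncomputable def cfProd (α : ℝ) (k : ℕ) : ℝ := ∏ i ∈ range k, cfFrac α i

lemma cfProd_succ (α : ℝ) (k : ℕ) : cfProd α (k + 1) = cfProd α k * cfFrac α k :=
  prod_range_succ _ _

lemma cfProd_one (α : ℝ) : cfProd α 1 = α := by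
  simp [cfProd, cfFrac]

lemma cfProd_pos {α : ℝ} (h : ∀ k, 0 < cfFrac α k) (k : ℕ) : 0 < cfProd α k :=
  prod_pos fun i _ => h i

lemma cfProd_antitone {α : ℝ} (h : ∀ k, cfFrac α k ∈ Set.Ioo (0 : ℝ) 1) :
    Antitone (cfProd α) :=
  antitone_nat_of_succ_le fun k => by
    rw [cfProd_succ]
    exact mul_le_of_le_one_right (cfProd_pos (fun i => (h i).1) k).le (h k).2.le

lemma cfProd_add_two {α : ℝ} {k : ℕ} (hk : 0 < cfFrac α k) :
    cfProd α (k + 2) = cfProd α k - cfA α (k + 1) * cfProd α (k + 1) := by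
  rw [cfProd_succ, cfProd_succ, mul_assoc, cfFrac_mul_cfFrac_succ hk]
  ring

lemma two_mul_cfProd_add_two_lt {α : ℝ} (h : ∀ k, cfFrac α k ∈ Set.Ioo (0 : ℝ) 1) (k : ℕ) :
    2 * cfProd α (k + 2) < cfProd α k := by
  have ha : (1 : ℝ) ≤ cfA α (k + 1) := by exact_mod_cast one_le_cfA_succ (h k)
  have hlt : cfProd α (k + 2) < cfProd α (k + 1) := by
    rw [cfProd_succ α (k + 1)]
    exact mul_lt_of_lt_one_right (cfProd_pos (fun i => (h i).1) _) (h _).2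
  have hrec := cfProd_add_two (h k).1
  nlinarith [cfProd_pos (fun i => (h i).1) (k + 1)]

lemma cfQ_mul_sub_cfP {α : ℝ} (h : ∀ k, 0 < cfFrac α k) :
    ∀ k, (cfQ α k : ℝ) * α - cfP α k = (-1) ^ k * cfProd α (k + 1)
  | 0 => by simp [cfQ, cfP, cfProd_one]
  | 1 => by
    have h2 : cfProd α 2 = 1 - cfA α 1 * α := by
      rw [cfProd_succ, cfProd_one]
      exact cfFrac_mul_cfFrac_succ (h 0)
    simp [cfQ, cfP, h2]
  | k + 2 => by
    simp only [cfQ, cfP, Nat.cast_add, Nat.cast_mul]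
    linear_combination (cfA α (k + 2) : ℝ) * cfQ_mul_sub_cfP h (k + 1) + cfQ_mul_sub_cfP h k
      - (-1) ^ k * cfProd_add_two (h (k + 1))

noncomputable def ostrowskiTail (α : ℝ) (b : ℕ → ℕ) (m j : ℕ) : ℝ :=
  ∑ i ∈ range j, (-1) ^ i * (b (m + i) * cfProd α (m + i + 1))

lemma ostrowskiTail_zero (α : ℝ) (b : ℕ → ℕ) (m : ℕ) : ostrowskiTail α b m 0 = 0 :=
  sum_range_zero _

lemma ostrowskiTail_succ (α : ℝ) (b : ℕ → ℕ) (m j : ℕ) :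
    ostrowskiTail α b m (j + 1) = b m * cfProd α (m + 1) - ostrowskiTail α b (m + 1) j := by
  rw [ostrowskiTail, ostrowskiTail, sum_range_succ', sub_eq_neg_add, ← sum_neg_distrib]
  simp only [pow_zero, one_mul, add_zero]
  congr 1
  refine sum_congr rfl fun i _ => ?_
  rw [pow_succ, add_comm i 1, ← add_assoc]
  ring

lemma ostrowskiTail_mem_Ioo {α : ℝ} (h : ∀ k, 0 < cfFrac α k) {b : ℕ → ℕ} :
    ∀ {m : ℕ} (j : ℕ), (∀ k, m ≤ k → b k ≤ cfA α (k + 1)) →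
      -cfProd α (m + 1) < ostrowskiTail α b m j ∧ ostrowskiTail α b m j < cfProd α m
  | m, 0, _ => by
    rw [ostrowskiTail_zero]
    exact ⟨neg_lt_zero.mpr (cfProd_pos h _), cfProd_pos h _⟩
  | m, j + 1, hb => by
    obtain ⟨hlo, hhi⟩ := ostrowskiTail_mem_Ioo h (m := m + 1) j fun k hk => hb k (by omega)
    have hbm : (b m : ℝ) ≤ cfA α (m + 1) := by exact_mod_cast hb m le_rfl
    have hrec := cfProd_add_two (h m)
    have hpos := cfProd_pos h (m + 1)
    rw [ostrowskiTail_succ]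
    constructor <;> nlinarith [(b m).cast_nonneg (α := ℝ)]

lemma ostrowskiTail_pos {α : ℝ} (h : ∀ k, 0 < cfFrac α k) {b : ℕ → ℕ} {m : ℕ}
    (hb : ∀ k, m ≤ k → b k ≤ cfA α (k + 1)) (hm : b m ≠ 0) (j : ℕ) :
    0 < ostrowskiTail α b m (j + 1) := by
  have hm' : (1 : ℝ) ≤ b m := by exact_mod_cast Nat.one_le_iff_ne_zero.mpr hm
  have htail := (ostrowskiTail_mem_Ioo h (m := m + 1) j fun k hk => hb k (by omega)).2
  rw [ostrowskiTail_succ]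
  nlinarith [cfProd_pos h (m + 1)]

lemma natCast_mul_eq_add_ostrowskiTail {α : ℝ} (h : ∀ k, 0 < cfFrac α k) {b : ℕ → ℕ}
    {n L M : ℕ} (hn : n = ∑ k ∈ range M, b k * cfQ α k) (hL0 : ∀ k, k < L → b k = 0)
    (hLM : L ≤ M) :
    (n : ℝ) * α = (∑ k ∈ range M, b k * cfP α k : ℕ) + (-1) ^ L * ostrowskiTail α b L (M - L) := by
  obtain ⟨j, rfl⟩ := Nat.exists_eq_add_of_le hLM
  have hsigned : (n : ℝ) * α - (∑ k ∈ range (L + j), b k * cfP α k : ℕ)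
      = ∑ k ∈ range (L + j), b k * ((-1) ^ k * cfProd α (k + 1)) := by
    simp only [hn, Nat.cast_sum, Nat.cast_mul, sum_mul, ← sum_sub_distrib,
      ← cfQ_mul_sub_cfP h]
    exact sum_congr rfl fun k _ => by ring
  rw [← sub_eq_iff_eq_add', hsigned, sum_range_add, Nat.add_sub_cancel_left, ostrowskiTail,
    mul_sum, sum_eq_zero fun k hk => by rw [hL0 k (mem_range.mp hk), Nat.cast_zero, zero_mul],
    zero_add]
  exact sum_congr rfl fun i _ => by rw [pow_add]; ring

lemma cfProd_lt_half {α : ℝ} (h : ∀ k, cfFrac α k ∈ Set.Ioo (0 : ℝ) 1) {L : ℕ}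
    (hL : 2 ≤ L ∨ (α < 1 / 2 ∧ 1 ≤ L)) : cfProd α L < 1 / 2 := by
  rcases hL with hL | ⟨hα, hL⟩
  · have h2 := two_mul_cfProd_add_two_lt h 0
    rw [show cfProd α 0 = 1 from prod_range_zero _] at h2
    linarith [cfProd_antitone h hL]
  · exact (cfProd_antitone h hL).trans_lt ((cfProd_one α).trans_lt hα)

lemma distNearInt_intCast_add_neg_one_pow_mul (z : ℤ) (L : ℕ) {t : ℝ} (ht0 : 0 < t)
    (ht : t < 1 / 2) :
    distNearInt (z + (-1) ^ L * t) =
      if Even L then Int.fract (z + (-1) ^ L * t) else 1 - Int.fract (z + (-1) ^ L * t) := by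
  rcases Nat.even_or_odd L with hL | hL
  · have hfract : Int.fract (z + t) = t := Int.fract_eq_iff.mpr
      ⟨ht0.le, by linarith, z, by ring⟩
    rw [if_pos hL, hL.neg_one_pow, one_mul, distNearInt, hfract]
    exact min_eq_left (by linarith)
  · have hfract : Int.fract (z + -t) = 1 - t := Int.fract_eq_iff.mpr
      ⟨by linarith, by linarith, z - 1, by push_cast; ring⟩
    rw [if_neg (Nat.not_even_iff_odd.mpr hL), hL.neg_one_pow, neg_one_mul, distNearInt, hfract]
    exact min_eq_right (by linarith)

theorem stmt9_general (α : ℝ) (hα : α ∈ Set.Ioo (0:ℝ) 1) (hirr : Irrational α)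
    (n : ℕ) (b : ℕ → ℕ) (hb : OstrowskiRep α n b)
    (L : ℕ) (hL : b L ≠ 0) (hL0 : ∀ k, k < L → b k = 0)
    (hLlow : 2 ≤ L ∨ (α < 1 / 2 ∧ 1 ≤ L)) :
    distNearInt ((n : ℝ) * α) =
      if Even L then Int.fract ((n : ℝ) * α) else 1 - Int.fract ((n : ℝ) * α) := by
  obtain ⟨-, hbk, -, N, hN, hn⟩ := hb
  have hfrac := cfFrac_mem_Ioo hα hirr
  have hpos : ∀ k, 0 < cfFrac α k := fun k => (hfrac k).1
  have hL1 : 1 ≤ L := by omega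
  have hLN : L ≤ N := not_lt.mp fun h => hL (hN L h)
  have hbL : ∀ k, L ≤ k → b k ≤ cfA α (k + 1) := fun k hk => hbk k (hL1.trans hk)
  obtain ⟨j, hj⟩ : ∃ j, N + 1 - L = j + 1 := ⟨N - L, by omega⟩
  rw [natCast_mul_eq_add_ostrowskiTail hpos hn hL0 (by omega), hj, ← Int.cast_natCast]
  exact distNearInt_intCast_add_neg_one_pow_mul _ L (ostrowskiTail_pos hpos hbL hL j)
    ((ostrowskiTail_mem_Ioo hpos (j + 1) hbL).2.trans (cfProd_lt_half hfrac hLlow))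

theorem stmt9 (α : ℝ) (hα : α ∈ Set.Ioo (0:ℝ) 1) (hirr : Irrational α)
    (n : ℕ) (hn : 1 ≤ n) (b : ℕ → ℕ) (hb : OstrowskiRep α n b)
    (L : ℕ) (hL : b L ≠ 0) (hL0 : ∀ k, k < L → b k = 0)
    (hLlow : 2 ≤ L ∨ (α < 1 / 2 ∧ 1 ≤ L)) :
    distNearInt ((n : ℝ) * α) =
      if Even L then Int.fract ((n : ℝ) * α) else 1 - Int.fract ((n : ℝ) * α) :=
  stmt9_general α hα hirr n b hb L hL hL0 hLlow
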